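/- arXiv:2509.05852 — 2 statements merged into one kernel-verified Lean document; each statement's English description precedes it below -/
import Mathlib

section
/- For any B > 1, any integer m ≥ 2, and any probability vectors p = (p₁,…,p_K) and q = (q₁,…,q_K), it holds that Σ_k p_k |min{B, log(p_k/q_k)}|^m ≤ (m! ∨ B^m/(B−1)) · Σ_k p_k · min{B, log(p_k/q_k)}. -/
open Real Finset
open scoped Nat

/-!
Write `t = log (p/q)` and `C = max m! (B ^ m / (B - 1))`. Since `p * exp (-t) = q`, the terms
`p * (min B t + exp (-t) - 1)` sum to `Σ p * min B t`, so it suffices to prove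
`|min B t| ^ m ≤ C * (min B t + exp (-t) - 1)` pointwise. For `t ≤ 0` this is the Taylor bound
`exp x ≥ 1 + x + x ^ m / m!`; for `t ≥ B` it is `B ^ m = B ^ m / (B - 1) * (B - 1)`.
For `0 ≤ t ≤ B`, `f t = t + exp (-t) - 1` satisfies `f (a * t) ≥ a ^ 2 * f t` for `a ∈ [0, 1]`
because its derivative `1 - exp (-t)` is concave and vanishes at `0`; with `a = t / B` this gives
`f t ≥ (t / B) ^ m * f B ≥ (t / B) ^ m * (B - 1)`.
-/

lemma exp_neg_mul_le {a : ℝ} (ha₀ : 0 ≤ a) (ha₁ : a ≤ 1) (x : ℝ) :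
    exp (-(a * x)) ≤ a * exp (-x) + (1 - a) := by
  have := convexOn_exp.2 (Set.mem_univ (-x)) (Set.mem_univ 0) ha₀ (sub_nonneg.2 ha₁)
    (by ring)
  simpa [smul_eq_mul] using this

lemma sq_mul_add_exp_neg_sub_one_le {a : ℝ} (ha₀ : 0 ≤ a) (ha₁ : a ≤ 1) {x : ℝ}
    (hx : 0 ≤ x) :
    a ^ 2 * (x + exp (-x) - 1) ≤ a * x + exp (-(a * x)) - 1 := by
  set g : ℝ → ℝ := fun y ↦ a * y + exp (-(a * y)) - 1 - a ^ 2 * (y + exp (-y) - 1)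
  have hg : ∀ y, HasDerivAt g (a * ((1 - exp (-(a * y))) - a * (1 - exp (-y)))) y := by
    intro y
    have hay := (hasDerivAt_id' y).const_mul a
    have hy := (((hasDerivAt_id' y).add (hasDerivAt_id' y).neg.exp).sub_const 1).const_mul (a ^ 2)
    refine (((hay.add hay.neg.exp).sub_const 1).sub hy).congr_deriv ?_
    simp only [Pi.neg_apply]; ring
  have hmono : Monotone g := monotone_of_deriv_nonneg (fun y ↦ (hg y).differentiableAt)
    fun y ↦ (hg y).deriv ▸ mul_nonneg ha₀ (by linarith [exp_neg_mul_le ha₀ ha₁ y])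
  have := hmono hx
  simp only [g, mul_zero, neg_zero, exp_zero] at this
  linarith

lemma pow_mul_sub_one_le_pow_mul_add_exp_neg_sub_one {B t : ℝ} (hB : 0 < B) (ht : 0 ≤ t)
    (htB : t ≤ B) {m : ℕ} (hm : 2 ≤ m) :
    t ^ m * (B - 1) ≤ B ^ m * (t + exp (-t) - 1) := by
  set a := t / B
  have ha₀ : 0 ≤ a := div_nonneg ht hB.le
  have ha₁ : a ≤ 1 := div_le_one_of_le₀ htB hB.le
  have hBt : a * B = t := div_mul_cancel₀ t hB.ne'
  calc t ^ m * (B - 1) = B ^ m * (a ^ m * (B - 1)) := by rw [← hBt, mul_pow]; ring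
    _ ≤ B ^ m * (a ^ 2 * (B + exp (-B) - 1)) := by
        have hgap : 0 ≤ B + exp (-B) - 1 := by linarith [add_one_le_exp (-B)]
        gcongr B ^ m * ?_
        calc a ^ m * (B - 1) ≤ a ^ m * (B + exp (-B) - 1) := by
              gcongr; linarith [exp_pos (-B)]
          _ ≤ a ^ 2 * (B + exp (-B) - 1) :=
              mul_le_mul_of_nonneg_right (pow_le_pow_of_le_one ha₀ ha₁ hm) hgap
    _ ≤ B ^ m * (t + exp (-t) - 1) := by
        gcongr
        rw [← hBt]
        exact sq_mul_add_exp_neg_sub_one_le ha₀ ha₁ hB.le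

lemma pow_le_factorial_mul_exp_sub_one_sub {x : ℝ} (hx : 0 ≤ x) {m : ℕ} (hm : 2 ≤ m) :
    x ^ m ≤ m ! * (exp x - 1 - x) := by
  have hlow : ∑ i ∈ range 2, x ^ i / i ! ≤ ∑ i ∈ range m, x ^ i / i ! :=
    sum_le_sum_of_subset_of_nonneg (range_subset_range.2 hm) fun i _ _ ↦ by positivity
  have hexp := sum_le_exp_of_nonneg hx (m + 1)
  rw [sum_range_succ] at hexp
  simp only [sum_range_succ, range_one, sum_singleton, pow_zero, pow_one, Nat.factorial_zero,
    Nat.factorial_one, Nat.cast_one, div_one] at hlow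
  rw [← div_le_iff₀' (by positivity)]
  linarith

lemma abs_min_pow_le {B : ℝ} (hB : 1 < B) {m : ℕ} (hm : 2 ≤ m) (t : ℝ) :
    |min B t| ^ m ≤ max (m ! : ℝ) (B ^ m / (B - 1)) * (min B t + exp (-t) - 1) := by
  have hB₁ : 0 < B - 1 := sub_pos.2 hB
  have hfac : (m ! : ℝ) ≤ max (m ! : ℝ) (B ^ m / (B - 1)) := le_max_left _ _
  have hpow : B ^ m / (B - 1) ≤ max (m ! : ℝ) (B ^ m / (B - 1)) := le_max_right _ _
  rcases le_or_gt t 0 with ht | ht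
  · rw [min_eq_right (ht.trans (by linarith)), abs_of_nonpos ht]
    have h := pow_le_factorial_mul_exp_sub_one_sub (neg_nonneg.2 ht) hm
    have hgap : 0 ≤ t + exp (-t) - 1 := by linarith [add_one_le_exp (-t)]
    calc (-t) ^ m ≤ m ! * (t + exp (-t) - 1) := by linarith
      _ ≤ _ := mul_le_mul_of_nonneg_right hfac hgap
  rcases le_or_gt t B with htB | htB
  · rw [min_eq_right htB, abs_of_pos ht]
    have h := pow_mul_sub_one_le_pow_mul_add_exp_neg_sub_one (by linarith) ht.le htB hm
    have hgap : 0 ≤ t + exp (-t) - 1 := by linarith [add_one_le_exp (-t)]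
    calc t ^ m ≤ B ^ m / (B - 1) * (t + exp (-t) - 1) := by
          rw [div_mul_eq_mul_div, le_div_iff₀ hB₁]; exact h
      _ ≤ _ := mul_le_mul_of_nonneg_right hpow hgap
  · rw [min_eq_left htB.le, abs_of_pos (by linarith)]
    calc B ^ m = B ^ m / (B - 1) * (B - 1) := (div_mul_cancel₀ _ hB₁.ne').symm
      _ ≤ _ := mul_le_mul hpow (by linarith [exp_pos (-t)]) hB₁.le
          ((div_pos (by positivity) hB₁).le.trans hpow)

lemma mul_abs_min_log_div_pow_le {B : ℝ} (hB : 1 < B) {m : ℕ} (hm : 2 ≤ m) {p q : ℝ}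
    (hp : 0 ≤ p) (hq : 0 ≤ q) (hpq : 0 < p → 0 < q) :
    p * |min B (log (p / q))| ^ m ≤
      max (m ! : ℝ) (B ^ m / (B - 1)) * (p * min B (log (p / q)) + q - p) := by
  set C := max (m ! : ℝ) (B ^ m / (B - 1))
  rcases hp.eq_or_lt with rfl | hp
  · simpa using mul_nonneg ((Nat.cast_pos.2 m.factorial_pos).le.trans (le_max_left _ _)) hq
  have hq_eq : q = p * exp (-log (p / q)) := by
    rw [exp_neg, exp_log (div_pos hp (hpq hp))]
    field_simp
  calc p * |min B (log (p / q))| ^ m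
      ≤ p * (C * (min B (log (p / q)) + exp (-log (p / q)) - 1)) :=
        mul_le_mul_of_nonneg_left (abs_min_pow_le hB hm _) hp.le
    _ = C * (p * min B (log (p / q)) + q - p) := by linear_combination -C * hq_eq

/-- For `B > 1`, `m ≥ 2`, and probability vectors `p`, `q`:
`Σ_k p_k |min{B, log(p_k/q_k)}|^m ≤ (m! ∨ B^m/(B−1)) Σ_k p_k min{B, log(p_k/q_k)}`. -/
theorem truncated_kl_moment_bound (K : ℕ) (B : ℝ) (hB : 1 < B) (m : ℕ) (hm : 2 ≤ m)
    (p q : Fin K → ℝ)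
    (hp0 : ∀ k, 0 ≤ p k) (hp1 : ∑ k, p k = 1)
    (hq0 : ∀ k, 0 ≤ q k) (hq1 : ∑ k, q k = 1)
    (hpq : ∀ k, 0 < p k → 0 < q k) :
    ∑ k, p k * |min B (Real.log (p k / q k))| ^ m ≤
      max (Nat.factorial m : ℝ) (B ^ m / (B - 1)) * ∑ k, p k * min B (Real.log (p k / q k)) := by
  calc ∑ k, p k * |min B (log (p k / q k))| ^ m
      ≤ ∑ k, max (m ! : ℝ) (B ^ m / (B - 1)) * (p k * min B (log (p k / q k)) + q k - p k) :=
        sum_le_sum fun k _ ↦ mul_abs_min_log_div_pow_le hB hm (hp0 k) (hq0 k) (hpq k)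
    _ = max (m ! : ℝ) (B ^ m / (B - 1)) * ∑ k, p k * min B (log (p k / q k)) := by
        rw [← mul_sum, sum_sub_distrib, sum_add_distrib, hp1, hq1, add_sub_cancel_right]
end

section
/- Let M₁, M₂ ∈ ℝ^{a×b} with rank(M₁) = rank(M₂). Then the Moore–Penrose pseudoinverses satisfy ‖M₁† − M₂†‖ ≤ ((1+√5)/2)·‖M₁†‖·‖M₂†‖·‖M₁ − M₂‖, where ‖·‖ is the spectral (operator) norm. -/
open Matrix

/-- The four Penrose conditions characterizing the Moore–Penrose pseudoinverse of a
(possibly rectangular) real matrix. -/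
def IsMoorePenrose {a b : ℕ} (M : Matrix (Fin a) (Fin b) ℝ)
    (Mp : Matrix (Fin b) (Fin a) ℝ) : Prop :=
  M * Mp * M = M ∧ Mp * M * Mp = Mp ∧ (M * Mp)ᵀ = M * Mp ∧ (Mp * M)ᵀ = Mp * M

/-- Spectral (ℓ₂ operator) norm of a real matrix. -/
noncomputable def specNorm {a b : ℕ} (M : Matrix (Fin a) (Fin b) ℝ) : ℝ :=
  ‖LinearMap.toContinuousLinearMap (Matrix.toEuclideanLin M)‖

open Matrix ContinuousLinearMap Module
open scoped InnerProductSpace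

noncomputable section Wedin

abbrev Euc (n : ℕ) := EuclideanSpace ℝ (Fin n)

noncomputable def toCLM {a b : ℕ} (M : Matrix (Fin a) (Fin b) ℝ) : Euc b →L[ℝ] Euc a :=
  LinearMap.toContinuousLinearMap (Matrix.toEuclideanLin M)

lemma toCLM_mul {a b c : ℕ} (M : Matrix (Fin a) (Fin b) ℝ) (N : Matrix (Fin b) (Fin c) ℝ) :
    toCLM (M * N) = toCLM M ∘L toCLM N := by
  ext x
  simp [toCLM, Matrix.toEuclideanLin_apply, Matrix.mulVec_mulVec]

lemma toCLM_sub {a b : ℕ} (M N : Matrix (Fin a) (Fin b) ℝ) :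
    toCLM (M - N) = toCLM M - toCLM N := by
  ext x
  simp [toCLM, Matrix.toEuclideanLin_apply, Matrix.sub_mulVec]

lemma toCLM_transpose {a b : ℕ} (M : Matrix (Fin a) (Fin b) ℝ) :
    toCLM Mᵀ = ContinuousLinearMap.adjoint (toCLM M) := by
  have h : Mᴴ = Mᵀ := by ext i j; simp [Matrix.conjTranspose_apply]
  rw [toCLM, ← h, Matrix.toEuclideanLin_conjTranspose_eq_adjoint,
    LinearMap.adjoint_toContinuousLinearMap]
  rfl

lemma rank_eq_toCLM {a b : ℕ} (M : Matrix (Fin a) (Fin b) ℝ) :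
    M.rank = Module.finrank ℝ (LinearMap.range (toCLM M).toLinearMap) := by
  rw [Matrix.rank_eq_finrank_range_toLin M (PiLp.basisFun 2 ℝ (Fin a)) (PiLp.basisFun 2 ℝ (Fin b))]
  rfl


lemma specNorm_eq {a b : ℕ} (M : Matrix (Fin a) (Fin b) ℝ) : specNorm M = ‖toCLM M‖ := rfl

lemma comp_apply' {n m k : ℕ} {P : Euc m →L[ℝ] Euc k} {Q : Euc n →L[ℝ] Euc m}
    {R : Euc n →L[ℝ] Euc k} (h : P ∘L Q = R) (x : Euc n) : P (Q x) = R x := by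
  rw [← h]; rfl

lemma sa_inner {n : ℕ} {P : Euc n →L[ℝ] Euc n}
    (hsa : ContinuousLinearMap.adjoint P = P) (x y : Euc n) :
    ⟪P x, y⟫_ℝ = ⟪x, P y⟫_ℝ := by
  conv_rhs => rw [← hsa]
  rw [ContinuousLinearMap.adjoint_inner_right]

lemma proj_contraction {n : ℕ} (P : Euc n →L[ℝ] Euc n)
    (hid : P ∘L P = P) (hsa : ContinuousLinearMap.adjoint P = P) (x : Euc n) :
    ‖P x‖ ≤ ‖x‖ := by
  have h1 : ⟪P x, P x⟫_ℝ = ⟪x, P x⟫_ℝ := by rw [sa_inner hsa, comp_apply' hid]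
  have h2 : ‖P x‖ ^ 2 ≤ ‖x‖ * ‖P x‖ := by
    rw [← real_inner_self_eq_norm_sq, h1]; exact real_inner_le_norm x (P x)
  rcases eq_or_lt_of_le (norm_nonneg (P x)) with h | h
  · rw [← h]; exact norm_nonneg x
  · nlinarith

lemma pyth {n : ℕ} (P : Euc n →L[ℝ] Euc n)
    (hid : P ∘L P = P) (hsa : ContinuousLinearMap.adjoint P = P) (x : Euc n) :
    ‖x‖ ^ 2 = ‖P x‖ ^ 2 + ‖x - P x‖ ^ 2 := by
  have horth : ⟪P x, x - P x⟫_ℝ = 0 := by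
    rw [sa_inner hsa, map_sub, comp_apply' hid, sub_self, inner_zero_right]
  have hx : x = P x + (x - P x) := by abel
  calc ‖x‖ ^ 2 = ‖P x + (x - P x)‖ ^ 2 := by rw [← hx]
    _ = ‖P x‖ ^ 2 + 2 * ⟪P x, x - P x⟫_ℝ + ‖x - P x‖ ^ 2 := norm_add_sq_real _ _
    _ = ‖P x‖ ^ 2 + ‖x - P x‖ ^ 2 := by rw [horth]; ring

lemma le_of_sq_le_sq' {x y : ℝ} (hx : 0 ≤ x) (hy : 0 ≤ y) (h : x ^ 2 ≤ y ^ 2) : x ≤ y := by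
  nlinarith

/-- The key equal-rank projection lemma:
`‖Q(1-P)‖ ≤ ‖(1-Q)P‖` for orthogonal projections of equal rank. -/
lemma key_proj {n : ℕ} (P Q : Euc n →L[ℝ] Euc n)
    (hPid : P ∘L P = P) (hPsa : ContinuousLinearMap.adjoint P = P)
    (hQid : Q ∘L Q = Q) (hQsa : ContinuousLinearMap.adjoint Q = Q)
    (hrank : finrank ℝ (LinearMap.range P.toLinearMap) = finrank ℝ (LinearMap.range Q.toLinearMap)) :
    ‖Q ∘L (1 - P)‖ ≤ ‖(1 - Q) ∘L P‖ := by
  have hPfix : ∀ u : Euc n, u ∈ LinearMap.range P.toLinearMap → P u = u := by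
    rintro u ⟨w, rfl⟩; exact comp_apply' hPid w
  have hQfix : ∀ u : Euc n, u ∈ LinearMap.range Q.toLinearMap → Q u = u := by
    rintro u ⟨w, rfl⟩; exact comp_apply' hQid w
  set s := ‖(1 - Q) ∘L P‖ with hsdef
  have hs0 : 0 ≤ s := norm_nonneg _
  have hP' : P * P = P := hPid
  have hQ' : Q * Q = Q := hQid
  have h1Pid : (1 - P) ∘L (1 - P) = 1 - P := by
    show (1 - P) * (1 - P) = 1 - P
    rw [mul_sub, sub_mul, sub_mul, mul_one, one_mul, hP']; abel
  have h1Psa : ContinuousLinearMap.adjoint (1 - P) = 1 - P := by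
    rw [map_sub, hPsa]
    congr 1
    rw [ContinuousLinearMap.one_def, ContinuousLinearMap.adjoint_id]
  by_cases hcase : 1 ≤ s
  · refine le_trans (opNorm_le_bound _ zero_le_one fun x => ?_) (by linarith)
    rw [one_mul]
    calc ‖(Q ∘L (1 - P)) x‖ = ‖Q ((1 - P) x)‖ := rfl
      _ ≤ ‖(1 - P) x‖ := proj_contraction Q hQid hQsa _
      _ ≤ ‖x‖ := proj_contraction (1 - P) h1Pid h1Psa x
  · push_neg at hcase
    set m := Real.sqrt (1 - s ^ 2) with hmdef
    have hm2 : m ^ 2 = 1 - s ^ 2 := Real.sq_sqrt (by nlinarith only [hs0, hcase])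
    have hm : 0 < m := Real.sqrt_pos.mpr (by nlinarith only [hs0, hcase])
    have stepA : ∀ u : Euc n, P u = u → m * ‖u‖ ≤ ‖Q u‖ := by
      intro u hu
      have h1 : ‖u - Q u‖ ≤ s * ‖u‖ := by
        have h := ((1 - Q) ∘L P).le_opNorm u
        have e1 : ((1 - Q) ∘L P) u = u - Q u := by
          rw [ContinuousLinearMap.comp_apply, hu, ContinuousLinearMap.sub_apply,
            ContinuousLinearMap.one_apply]
        rwa [e1] at h
      have h2 : ‖u‖ ^ 2 = ‖Q u‖ ^ 2 + ‖u - Q u‖ ^ 2 := pyth Q hQid hQsa u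
      refine le_of_sq_le_sq' (mul_nonneg hm.le (norm_nonneg u)) (norm_nonneg _) ?_
      have hsq : ‖u - Q u‖ ^ 2 ≤ (s * ‖u‖) ^ 2 :=
        pow_le_pow_left₀ (norm_nonneg _) h1 2
      nlinarith only [h2, hsq, hm2, norm_nonneg u, hs0]
    -- the restricted map from range P to range Q
    let f : LinearMap.range P.toLinearMap →ₗ[ℝ] LinearMap.range Q.toLinearMap :=
      ((Q : Euc n →ₗ[ℝ] Euc n).comp (LinearMap.range P.toLinearMap).subtype).codRestrict
        (LinearMap.range Q.toLinearMap) (fun c => ⟨c, rfl⟩)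
    have hfval : ∀ z : LinearMap.range P.toLinearMap, (f z : Euc n) = Q (z : Euc n) := by
      intro z
      simp only [f, LinearMap.codRestrict_apply, LinearMap.comp_apply,
        Submodule.subtype_apply, ContinuousLinearMap.coe_coe]
      rfl
    have hfinj : Function.Injective f := by
      intro z w h
      have hQzw : Q (z : Euc n) = Q (w : Euc n) := by
        have h2 := congrArg Subtype.val h
        rwa [hfval, hfval] at h2
      have hz : P ((z : Euc n) - w) = (z : Euc n) - w := by
        rw [map_sub, hPfix _ z.2, hPfix _ w.2]
      have h0 : Q ((z : Euc n) - w) = 0 := by rw [map_sub, hQzw, sub_self]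
      have hA := stepA _ hz
      rw [h0, norm_zero] at hA
      have hn0 : ‖(z : Euc n) - w‖ ≤ 0 := by
        nlinarith only [hA, hm, norm_nonneg ((z : Euc n) - w)]
      have : (z : Euc n) - w = 0 := by simpa [norm_le_zero_iff] using hn0
      exact Subtype.ext (sub_eq_zero.mp this)
    have hfsurj : Function.Surjective f :=
      (LinearMap.injective_iff_surjective_of_finrank_eq_finrank hrank).mp hfinj
    have stepC : ∀ v : Euc n, Q v = v → m * ‖v‖ ≤ ‖P v‖ := by
      intro v hv
      rcases eq_or_ne v 0 with rfl | hv0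
      · simp
      obtain ⟨⟨u, huP⟩, hfu⟩ := hfsurj ⟨v, ⟨v, hv⟩⟩
      have hQu : Q u = v := by
        have h2 := congrArg Subtype.val hfu
        rwa [hfval] at h2
      have hufix : P u = u := hPfix _ huP
      have hinner : ⟪P v, u⟫_ℝ = ‖v‖ ^ 2 := by
        rw [sa_inner hPsa, hufix]
        conv_lhs => rw [← hv]
        rw [sa_inner hQsa, hQu, real_inner_self_eq_norm_sq]
      have hu_le : m * ‖u‖ ≤ ‖v‖ := by
        have hA := stepA u hufix
        rwa [hQu] at hA
      have hcs : ‖v‖ ^ 2 ≤ ‖P v‖ * ‖u‖ := hinner ▸ real_inner_le_norm (P v) u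
      have hvpos : 0 < ‖v‖ := norm_pos_iff.mpr hv0
      nlinarith only [hcs, hu_le, hvpos, hm, norm_nonneg (P v), norm_nonneg u]
    -- pass to adjoints
    have hadj : ‖Q ∘L (1 - P)‖ = ‖(1 - P) ∘L Q‖ := by
      conv_lhs => rw [← ContinuousLinearMap.adjoint.norm_map (Q ∘L (1 - P))]
      rw [ContinuousLinearMap.adjoint_comp, h1Psa, hQsa]
    rw [hadj]
    refine opNorm_le_bound _ hs0 fun x => ?_
    set v := Q x with hvdef
    have hvfix : Q v = v := comp_apply' hQid x
    have h2 : ‖v‖ ^ 2 = ‖P v‖ ^ 2 + ‖v - P v‖ ^ 2 := pyth P hPid hPsa v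
    have h3 : ‖v - P v‖ ≤ s * ‖v‖ := by
      refine le_of_sq_le_sq' (norm_nonneg _) (mul_nonneg hs0 (norm_nonneg _)) ?_
      have hC := stepC v hvfix
      have hC2 : (m * ‖v‖) ^ 2 ≤ ‖P v‖ ^ 2 :=
        pow_le_pow_left₀ (mul_nonneg hm.le (norm_nonneg v)) hC 2
      nlinarith only [h2, hC2, hm2, norm_nonneg v, hs0]
    calc ‖((1 - P) ∘L Q) x‖ = ‖v - P v‖ := by
          rw [ContinuousLinearMap.comp_apply, ContinuousLinearMap.sub_apply,
            ContinuousLinearMap.one_apply]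
      _ ≤ s * ‖v‖ := h3
      _ ≤ s * ‖x‖ := mul_le_mul_of_nonneg_left (proj_contraction Q hQid hQsa x) hs0
lemma one_sub_idem {n : ℕ} {P : Euc n →L[ℝ] Euc n} (hid : P ∘L P = P) :
    (1 - P) ∘L (1 - P) = 1 - P := by
  have hP' : P * P = P := hid
  show (1 - P) * (1 - P) = 1 - P
  rw [mul_sub, sub_mul, sub_mul, mul_one, one_mul, hP']; abel

lemma one_sub_sa {n : ℕ} {P : Euc n →L[ℝ] Euc n}
    (hsa : ContinuousLinearMap.adjoint P = P) :
    ContinuousLinearMap.adjoint (1 - P) = 1 - P := by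
  rw [map_sub, hsa]
  congr 1
  rw [ContinuousLinearMap.one_def, ContinuousLinearMap.adjoint_id]

lemma wedin_aux {a b : ℕ} (A B : Euc b →L[ℝ] Euc a) (A' B' : Euc a →L[ℝ] Euc b)
    (hA1 : (A ∘L A') ∘L A = A)
    (hB1 : (B ∘L B') ∘L B = B) (hB2 : (B' ∘L B) ∘L B' = B')
    (hA3 : ContinuousLinearMap.adjoint (A ∘L A') = A ∘L A')
    (hB3 : ContinuousLinearMap.adjoint (B ∘L B') = B ∘L B')
    (hrank : finrank ℝ (LinearMap.range (A ∘L A').toLinearMap) = finrank ℝ (LinearMap.range (B ∘L B').toLinearMap)) :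
    ‖B' ∘L (1 - A ∘L A')‖ ≤ ‖B'‖ * (‖B - A‖ * ‖A'‖) := by
  set PA := A ∘L A' with hPAdef
  set PB := B ∘L B' with hPBdef
  have hPAid : PA ∘L PA = PA :=
    ContinuousLinearMap.ext fun x => comp_apply' hA1 (A' x)
  have hPBid : PB ∘L PB = PB :=
    ContinuousLinearMap.ext fun x => comp_apply' hB1 (B' x)
  have hkey := key_proj PA PB hPAid hA3 hPBid hB3 hrank
  -- bound ‖(1 - PB) ∘L PA‖ by ‖B - A‖ * ‖A'‖
  have hzero : ∀ y, B (B' (B y)) = B y := fun y => comp_apply' hB1 y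
  have hrew : (1 - PB) ∘L PA = -((1 - PB) ∘L ((B - A) ∘L A')) := by
    refine ContinuousLinearMap.ext fun x => ?_
    simp only [ContinuousLinearMap.comp_apply, ContinuousLinearMap.sub_apply,
      ContinuousLinearMap.one_apply, ContinuousLinearMap.neg_apply, map_sub, hPAdef, hPBdef,
      hzero]
    abel
  have hbound1 : ‖(1 - PB) ∘L PA‖ ≤ ‖B - A‖ * ‖A'‖ := by
    rw [hrew, norm_neg]
    refine opNorm_le_bound _ (mul_nonneg (norm_nonneg _) (norm_nonneg _)) fun x => ?_
    calc ‖((1 - PB) ∘L ((B - A) ∘L A')) x‖ = ‖(1 - PB) (((B - A) ∘L A') x)‖ := rfl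
      _ ≤ ‖((B - A) ∘L A') x‖ :=
          proj_contraction (1 - PB) (one_sub_idem hPBid) (one_sub_sa hB3) _
      _ ≤ ‖(B - A) ∘L A'‖ * ‖x‖ := le_opNorm _ x
      _ ≤ ‖B - A‖ * ‖A'‖ * ‖x‖ :=
          mul_le_mul_of_nonneg_right (opNorm_comp_le _ _) (norm_nonneg x)
  have hfact : B' ∘L (1 - PA) = B' ∘L (PB ∘L (1 - PA)) :=
    ContinuousLinearMap.ext fun x => (comp_apply' hB2 ((1 - PA) x)).symm
  calc ‖B' ∘L (1 - PA)‖ = ‖B' ∘L (PB ∘L (1 - PA))‖ := by rw [← hfact]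
    _ ≤ ‖B'‖ * ‖PB ∘L (1 - PA)‖ := opNorm_comp_le _ _
    _ ≤ ‖B'‖ * ‖(1 - PB) ∘L PA‖ := mul_le_mul_of_nonneg_left hkey (norm_nonneg _)
    _ ≤ ‖B'‖ * (‖B - A‖ * ‖A'‖) := mul_le_mul_of_nonneg_left hbound1 (norm_nonneg _)

lemma golden_ineq (s t : ℝ) (hs : 0 ≤ s) (ht : 0 ≤ t) :
    (s + t) ^ 2 + s ^ 2 ≤ ((1 + Real.sqrt 5) / 2) ^ 2 * (s ^ 2 + t ^ 2) := by
  have h5 : Real.sqrt 5 ^ 2 = 5 := Real.sq_sqrt (by norm_num)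
  have h5' : 0 ≤ Real.sqrt 5 := Real.sqrt_nonneg 5
  have hphi2 : ((1 + Real.sqrt 5) / 2) ^ 2 = (3 + Real.sqrt 5) / 2 := by
    linear_combination h5 / 4
  rw [hphi2]
  nlinarith [sq_nonneg (4 * s - (2 * Real.sqrt 5 + 2) * t), mul_nonneg hs ht,
    (by positivity : (0:ℝ) < 2 * Real.sqrt 5 + 2), sq_nonneg (s - t), sq_nonneg (s + t)]

set_option maxHeartbeats 1000000 in
lemma wedin_main {a b : ℕ} (A B : Euc b →L[ℝ] Euc a) (A' B' : Euc a →L[ℝ] Euc b)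
    (hA1 : (A ∘L A') ∘L A = A) (hA2 : (A' ∘L A) ∘L A' = A')
    (hA3 : ContinuousLinearMap.adjoint (A ∘L A') = A ∘L A')
    (hA4 : ContinuousLinearMap.adjoint (A' ∘L A) = A' ∘L A)
    (hB1 : (B ∘L B') ∘L B = B) (hB2 : (B' ∘L B) ∘L B' = B')
    (hB3 : ContinuousLinearMap.adjoint (B ∘L B') = B ∘L B')
    (hB4 : ContinuousLinearMap.adjoint (B' ∘L B) = B' ∘L B)
    (hrank1 : finrank ℝ (LinearMap.range (A ∘L A').toLinearMap) = finrank ℝ (LinearMap.range (B ∘L B').toLinearMap))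
    (hrank2 : finrank ℝ (LinearMap.range (B' ∘L B).toLinearMap) = finrank ℝ (LinearMap.range (A' ∘L A).toLinearMap)) :
    ‖B' - A'‖ ≤ (1 + Real.sqrt 5) / 2 * ‖A'‖ * ‖B'‖ * ‖B - A‖ := by
  set c := ‖B'‖ * (‖B - A‖ * ‖A'‖) with hcdef
  have hc0 : 0 ≤ c := by positivity
  set φ := (1 + Real.sqrt 5) / 2 with hphidef
  have hφ0 : 0 ≤ φ := by positivity
  -- the three operator bounds
  have h₁ : ‖B' ∘L ((B - A) ∘L A')‖ ≤ c :=
    calc ‖B' ∘L ((B - A) ∘L A')‖ ≤ ‖B'‖ * ‖(B - A) ∘L A'‖ := opNorm_comp_le _ _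
      _ ≤ c := mul_le_mul_of_nonneg_left (opNorm_comp_le _ _) (norm_nonneg _)
  have h₂ : ‖B' ∘L (1 - A ∘L A')‖ ≤ c := wedin_aux A B A' B' hA1 hB1 hB2 hA3 hB3 hrank1
  have h₃ : ‖(1 - B' ∘L B) ∘L A'‖ ≤ c := by
    have eB : ContinuousLinearMap.adjoint B ∘L ContinuousLinearMap.adjoint B' = B' ∘L B := by
      rw [← ContinuousLinearMap.adjoint_comp, hB4]
    have eA : ContinuousLinearMap.adjoint A ∘L ContinuousLinearMap.adjoint A' = A' ∘L A := by
      rw [← ContinuousLinearMap.adjoint_comp, hA4]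
    have hBc : B ∘L (B' ∘L B) = B := by rw [← ContinuousLinearMap.comp_assoc, hB1]
    have hAc : A ∘L (A' ∘L A) = A := by rw [← ContinuousLinearMap.comp_assoc, hA1]
    have hAc' : A' ∘L (A ∘L A') = A' := by rw [← ContinuousLinearMap.comp_assoc, hA2]
    have hA1' : (ContinuousLinearMap.adjoint B ∘L ContinuousLinearMap.adjoint B') ∘L
        ContinuousLinearMap.adjoint B = ContinuousLinearMap.adjoint B := by
      rw [← ContinuousLinearMap.adjoint_comp, ← ContinuousLinearMap.adjoint_comp, hBc]
    have hB1' : (ContinuousLinearMap.adjoint A ∘L ContinuousLinearMap.adjoint A') ∘L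
        ContinuousLinearMap.adjoint A = ContinuousLinearMap.adjoint A := by
      rw [← ContinuousLinearMap.adjoint_comp, ← ContinuousLinearMap.adjoint_comp, hAc]
    have hB2' : (ContinuousLinearMap.adjoint A' ∘L ContinuousLinearMap.adjoint A) ∘L
        ContinuousLinearMap.adjoint A' = ContinuousLinearMap.adjoint A' := by
      rw [← ContinuousLinearMap.adjoint_comp, ← ContinuousLinearMap.adjoint_comp, hAc']
    have hA3' : ContinuousLinearMap.adjoint
        (ContinuousLinearMap.adjoint B ∘L ContinuousLinearMap.adjoint B') =
        ContinuousLinearMap.adjoint B ∘L ContinuousLinearMap.adjoint B' := by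
      rw [eB, hB4]
    have hB3' : ContinuousLinearMap.adjoint
        (ContinuousLinearMap.adjoint A ∘L ContinuousLinearMap.adjoint A') =
        ContinuousLinearMap.adjoint A ∘L ContinuousLinearMap.adjoint A' := by
      rw [eA, hA4]
    have hrank' : finrank ℝ (LinearMap.range
          (ContinuousLinearMap.adjoint B ∘L ContinuousLinearMap.adjoint B').toLinearMap) =
        finrank ℝ (LinearMap.range
          (ContinuousLinearMap.adjoint A ∘L ContinuousLinearMap.adjoint A').toLinearMap) := by
      rw [eA, eB]; exact hrank2
    have h := wedin_aux (ContinuousLinearMap.adjoint B) (ContinuousLinearMap.adjoint A)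
      (ContinuousLinearMap.adjoint B') (ContinuousLinearMap.adjoint A')
      hA1' hB1' hB2' hA3' hB3' hrank'
    -- h : ‖A'† ∘L (1 - B† ∘L B'†)‖ ≤ ‖A'†‖ * (‖A† - B†‖ * ‖B'†‖)
    rw [eB] at h
    have hLHS : ContinuousLinearMap.adjoint A' ∘L (1 - B' ∘L B) =
        ContinuousLinearMap.adjoint ((1 - B' ∘L B) ∘L A') := by
      rw [ContinuousLinearMap.adjoint_comp, one_sub_sa hB4]
    rw [hLHS, ContinuousLinearMap.adjoint.norm_map] at h
    have hn1 : ‖ContinuousLinearMap.adjoint A'‖ = ‖A'‖ :=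
      ContinuousLinearMap.adjoint.norm_map A'
    have hn2 : ‖ContinuousLinearMap.adjoint B'‖ = ‖B'‖ :=
      ContinuousLinearMap.adjoint.norm_map B'
    have hn3 : ‖ContinuousLinearMap.adjoint A - ContinuousLinearMap.adjoint B‖ = ‖B - A‖ := by
      rw [← map_sub, ContinuousLinearMap.adjoint.norm_map, norm_sub_rev]
    rw [hn1, hn2, hn3] at h
    calc ‖(1 - B' ∘L B) ∘L A'‖ ≤ ‖A'‖ * (‖B - A‖ * ‖B'‖) := h
      _ = c := by rw [hcdef]; ring
  -- pointwise estimate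
  have hPAid : (A ∘L A') ∘L (A ∘L A') = A ∘L A' :=
    ContinuousLinearMap.ext fun x => comp_apply' hA1 (A' x)
  refine opNorm_le_bound _ (by positivity) fun x => ?_
  set u := (A ∘L A') x with hudef
  set v := x - (A ∘L A') x with hvdef
  have huv : ‖x‖ ^ 2 = ‖u‖ ^ 2 + ‖v‖ ^ 2 := pyth (A ∘L A') hPAid hA3 x
  have hA'u : A' u = A' x := comp_apply' hA2 x
  have hA'v : A' v = 0 := by
    rw [hvdef, map_sub]
    rw [show A' ((A ∘L A') x) = A' x from comp_apply' hA2 x, sub_self]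
  set p := B' v - B' (B (A' x) - A (A' x)) with hpdef
  set q := B' (B (A' x)) - A' x with hqdef
  have hdecomp : B' x - A' x = p + q := by
    rw [hpdef, hqdef, hvdef, map_sub, map_sub]
    have : B' ((A ∘L A') x) = B' (A (A' x)) := rfl
    rw [this]; abel
  -- bounds on the three pieces
  have hn2' : ‖B' v‖ ≤ c * ‖v‖ := by
    have e1 : (B' ∘L (1 - A ∘L A')) v = B' v := by
      rw [ContinuousLinearMap.comp_apply, ContinuousLinearMap.sub_apply,
        ContinuousLinearMap.one_apply]
      rw [show (A ∘L A') v = A (A' v) from rfl, hA'v, map_zero, sub_zero]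
    calc ‖B' v‖ = ‖(B' ∘L (1 - A ∘L A')) v‖ := by rw [e1]
      _ ≤ ‖B' ∘L (1 - A ∘L A')‖ * ‖v‖ := le_opNorm _ v
      _ ≤ c * ‖v‖ := mul_le_mul_of_nonneg_right h₂ (norm_nonneg v)
  have hn1' : ‖B' (B (A' x) - A (A' x))‖ ≤ c * ‖u‖ := by
    have e1 : (B' ∘L ((B - A) ∘L A')) u = B' (B (A' x) - A (A' x)) := by
      rw [ContinuousLinearMap.comp_apply, ContinuousLinearMap.comp_apply,
        ContinuousLinearMap.sub_apply, hA'u]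
    calc ‖B' (B (A' x) - A (A' x))‖ = ‖(B' ∘L ((B - A) ∘L A')) u‖ := by rw [e1]
      _ ≤ ‖B' ∘L ((B - A) ∘L A')‖ * ‖u‖ := le_opNorm _ u
      _ ≤ c * ‖u‖ := mul_le_mul_of_nonneg_right h₁ (norm_nonneg u)
  have hn3' : ‖q‖ ≤ c * ‖u‖ := by
    have e1 : ((1 - B' ∘L B) ∘L A') u = -q := by
      rw [ContinuousLinearMap.comp_apply, ContinuousLinearMap.sub_apply,
        ContinuousLinearMap.one_apply, hA'u, hqdef]
      rw [show (B' ∘L B) (A' x) = B' (B (A' x)) from rfl]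
      abel
    calc ‖q‖ = ‖((1 - B' ∘L B) ∘L A') u‖ := by rw [e1, norm_neg]
      _ ≤ ‖(1 - B' ∘L B) ∘L A'‖ * ‖u‖ := le_opNorm _ u
      _ ≤ c * ‖u‖ := mul_le_mul_of_nonneg_right h₃ (norm_nonneg u)
  have hp' : ‖p‖ ≤ c * ‖u‖ + c * ‖v‖ := by
    calc ‖p‖ ≤ ‖B' v‖ + ‖B' (B (A' x) - A (A' x))‖ := norm_sub_le _ _
      _ ≤ c * ‖v‖ + c * ‖u‖ := add_le_add hn2' hn1'
      _ = c * ‖u‖ + c * ‖v‖ := by ring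
  -- orthogonality
  have horth : ⟪p, q⟫_ℝ = 0 := by
    set w := v - (B (A' x) - A (A' x)) with hwdef
    have hpw : p = B' w := by simp only [hpdef, hwdef, hvdef, map_sub]
    have hfix : (B' ∘L B) (B' w) = B' w := comp_apply' hB2 w
    have hRR : ∀ z : Euc b, (B' ∘L B) ((B' ∘L B) z) = (B' ∘L B) z := fun z =>
      comp_apply' hB2 (B z)
    have hzero : ⟪B' w, A' x - (B' ∘L B) (A' x)⟫_ℝ = 0 := by
      rw [← hfix, sa_inner hB4, map_sub (B' ∘L B) (A' x) ((B' ∘L B) (A' x)),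
        hRR (A' x), sub_self, inner_zero_right]
    have hqeq : q = -(A' x - (B' ∘L B) (A' x)) := by
      rw [hqdef, show (B' ∘L B) (A' x) = B' (B (A' x)) from rfl]; abel
    rw [hpw, hqeq, inner_neg_right, hzero, neg_zero]
  -- Pythagoras and numeric combination
  have hpq : ‖p + q‖ ^ 2 = ‖p‖ ^ 2 + ‖q‖ ^ 2 := by
    rw [norm_add_sq_real, horth]; ring
  have hsq : ‖(B' - A') x‖ ^ 2 ≤ (φ * c * ‖x‖) ^ 2 := by
    have e0 : (B' - A') x = p + q := hdecomp
    calc ‖(B' - A') x‖ ^ 2 = ‖p‖ ^ 2 + ‖q‖ ^ 2 := by rw [e0, hpq]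
      _ ≤ (c * ‖u‖ + c * ‖v‖) ^ 2 + (c * ‖u‖) ^ 2 :=
          add_le_add (pow_le_pow_left₀ (norm_nonneg p) hp' 2)
            (pow_le_pow_left₀ (norm_nonneg q) hn3' 2)
      _ = c ^ 2 * ((‖u‖ + ‖v‖) ^ 2 + ‖u‖ ^ 2) := by ring
      _ ≤ c ^ 2 * (φ ^ 2 * (‖u‖ ^ 2 + ‖v‖ ^ 2)) :=
          mul_le_mul_of_nonneg_left (golden_ineq ‖u‖ ‖v‖ (norm_nonneg u) (norm_nonneg v))
            (sq_nonneg c)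
      _ = (φ * c * ‖x‖) ^ 2 := by rw [← huv]; ring
  have hfin : ‖(B' - A') x‖ ≤ φ * c * ‖x‖ :=
    le_of_sq_le_sq' (norm_nonneg _) (by positivity) hsq
  calc ‖(B' - A') x‖ ≤ φ * c * ‖x‖ := hfin
    _ = φ * ‖A'‖ * ‖B'‖ * ‖B - A‖ * ‖x‖ := by rw [hcdef]; ring


lemma rank_mul_pinv_left {a b : ℕ} (M : Matrix (Fin a) (Fin b) ℝ)
    (Mp : Matrix (Fin b) (Fin a) ℝ) (h : M * Mp * M = M) : (M * Mp).rank = M.rank := by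
  refine le_antisymm (Matrix.rank_mul_le_left M Mp) ?_
  have h2 := Matrix.rank_mul_le_left (M * Mp) M
  rwa [h] at h2

lemma rank_mul_pinv_right {a b : ℕ} (M : Matrix (Fin a) (Fin b) ℝ)
    (Mp : Matrix (Fin b) (Fin a) ℝ) (h : M * Mp * M = M) : (Mp * M).rank = M.rank := by
  refine le_antisymm (Matrix.rank_mul_le_right Mp M) ?_
  have h2 := Matrix.rank_mul_le_right M (Mp * M)
  rwa [← Matrix.mul_assoc, h] at h2

end Wedin

/-- **Wedin's perturbation bound.** For matrices of equal rank,
`‖M₁† − M₂†‖ ≤ ((1+√5)/2)‖M₁†‖‖M₂†‖‖M₁ − M₂‖` in spectral norm. -/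
theorem wedin_pseudoinverse_perturbation (a b : ℕ)
    (M₁ M₂ : Matrix (Fin a) (Fin b) ℝ) (hrank : M₁.rank = M₂.rank)
    (M₁p M₂p : Matrix (Fin b) (Fin a) ℝ)
    (h1 : IsMoorePenrose M₁ M₁p) (h2 : IsMoorePenrose M₂ M₂p) :
    specNorm (M₁p - M₂p) ≤
      (1 + Real.sqrt 5) / 2 * specNorm M₁p * specNorm M₂p * specNorm (M₁ - M₂) := by
  obtain ⟨h11, h12, h13, h14⟩ := h1
  obtain ⟨h21, h22, h23, h24⟩ := h2
  -- CLM versions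
  have hA1 : (toCLM M₂ ∘L toCLM M₂p) ∘L toCLM M₂ = toCLM M₂ := by
    rw [← toCLM_mul, ← toCLM_mul]; exact congrArg toCLM h21
  have hA2 : (toCLM M₂p ∘L toCLM M₂) ∘L toCLM M₂p = toCLM M₂p := by
    rw [← toCLM_mul, ← toCLM_mul]; exact congrArg toCLM h22
  have hA3 : ContinuousLinearMap.adjoint (toCLM M₂ ∘L toCLM M₂p) = toCLM M₂ ∘L toCLM M₂p := by
    rw [← toCLM_mul, ← toCLM_transpose]; exact congrArg toCLM h23
  have hA4 : ContinuousLinearMap.adjoint (toCLM M₂p ∘L toCLM M₂) = toCLM M₂p ∘L toCLM M₂ := by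
    rw [← toCLM_mul, ← toCLM_transpose]; exact congrArg toCLM h24
  have hB1 : (toCLM M₁ ∘L toCLM M₁p) ∘L toCLM M₁ = toCLM M₁ := by
    rw [← toCLM_mul, ← toCLM_mul]; exact congrArg toCLM h11
  have hB2 : (toCLM M₁p ∘L toCLM M₁) ∘L toCLM M₁p = toCLM M₁p := by
    rw [← toCLM_mul, ← toCLM_mul]; exact congrArg toCLM h12
  have hB3 : ContinuousLinearMap.adjoint (toCLM M₁ ∘L toCLM M₁p) = toCLM M₁ ∘L toCLM M₁p := by
    rw [← toCLM_mul, ← toCLM_transpose]; exact congrArg toCLM h13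
  have hB4 : ContinuousLinearMap.adjoint (toCLM M₁p ∘L toCLM M₁) = toCLM M₁p ∘L toCLM M₁ := by
    rw [← toCLM_mul, ← toCLM_transpose]; exact congrArg toCLM h14
  have hrank1 : finrank ℝ (LinearMap.range (toCLM M₂ ∘L toCLM M₂p).toLinearMap) =
      finrank ℝ (LinearMap.range (toCLM M₁ ∘L toCLM M₁p).toLinearMap) := by
    rw [← toCLM_mul, ← toCLM_mul, ← rank_eq_toCLM, ← rank_eq_toCLM,
      rank_mul_pinv_left M₂ M₂p h21, rank_mul_pinv_left M₁ M₁p h11, hrank]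
  have hrank2 : finrank ℝ (LinearMap.range (toCLM M₁p ∘L toCLM M₁).toLinearMap) =
      finrank ℝ (LinearMap.range (toCLM M₂p ∘L toCLM M₂).toLinearMap) := by
    rw [← toCLM_mul, ← toCLM_mul, ← rank_eq_toCLM, ← rank_eq_toCLM,
      rank_mul_pinv_right M₂ M₂p h21, rank_mul_pinv_right M₁ M₁p h11, hrank]
  have key := wedin_main (toCLM M₂) (toCLM M₁) (toCLM M₂p) (toCLM M₁p)
    hA1 hA2 hA3 hA4 hB1 hB2 hB3 hB4 hrank1 hrank2
  rw [specNorm_eq, specNorm_eq, specNorm_eq, specNorm_eq, toCLM_sub, toCLM_sub]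
  exact key.trans_eq (by ring)
end
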